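/- arXiv:2309.12113 — 2 statements merged into one kernel-verified Lean document; each statement's English description precedes it below -/
import Mathlib

section
/- The second-price top-K mechanism is individually rational: under the setup of the top-K selection rule with payments p̃ᵢ = min(μᵢ/ρ_{K+1}, b_max), if each worker bids its true cost (bᵢ = cᵢ with cᵢ ≤ b_max), then every selected worker i ≤ K has nonnegative utility p̃ᵢ - cᵢ ≥ 0, and every unselected worker has utility 0. -/
/-- Individual rationality of the second-price top-K mechanism: with truthful
bids, every selected worker has nonnegative utility, and every unselected
worker has utility 0. -/
theorem stmt2 (N K : ℕ) (hKN : K < N) (μ c : Fin N → ℝ) (bmin bmax : ℝ)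
    (hμ : ∀ i, 0 < μ i) (hbmin : 0 < bmin)
    (hc : ∀ i, bmin ≤ c i ∧ c i ≤ bmax)
    (hsorted : ∀ i j : Fin N, i ≤ j → μ j / c j ≤ μ i / c i) :
    (∀ i : Fin N, (i : ℕ) < K →
      0 ≤ min (μ i * c ⟨K, hKN⟩ / μ ⟨K, hKN⟩) bmax - c i) ∧
    (∀ i : Fin N, K ≤ (i : ℕ) →
      (if (i : ℕ) < K then min (μ i * c ⟨K, hKN⟩ / μ ⟨K, hKN⟩) bmax - c i else 0) = 0) := by
  constructor
  · intro i hi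
    have hci : 0 < c i := lt_of_lt_of_le hbmin (hc i).1
    have hcK : 0 < c ⟨K, hKN⟩ := lt_of_lt_of_le hbmin (hc _).1
    have hle : μ ⟨K, hKN⟩ / c ⟨K, hKN⟩ ≤ μ i / c i := by
      apply hsorted
      exact Fin.le_def.mpr (le_of_lt hi)
    have h1 : c i ≤ μ i * c ⟨K, hKN⟩ / μ ⟨K, hKN⟩ := by
      rw [div_le_div_iff₀ hcK hci] at hle
      rw [le_div_iff₀ (hμ _)]
      nlinarith
    have h2 : c i ≤ bmax := (hc i).2
    have := le_min h1 h2
    linarith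
  · intro i hi
    simp [Nat.not_lt.mpr hi]
end

section
/- Cross-ratio bound via a δ-accurate quality surrogate: let each worker i have true quality μᵢ > 0, surrogate quality ν(i) with |μᵢ - ν(i)| ≤ δ, and bid bᵢ ≥ b_min > 0. Sort workers once by μᵢ/bᵢ and once by ν(i)/bᵢ, and let worker j* be the (K+1)-th worker in the first ordering and j† the (K+1)-th in the second ordering. Then μ_{j*}/b_{j*} - ν(j†)/b_{j†} ≤ δ/b_min. -/
/-- Cross-ratio bound via a δ-accurate quality surrogate: the true-quality
ratio of the (K+1)-th worker in the true ordering exceeds the surrogate-quality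
ratio of the (K+1)-th worker in the surrogate ordering by at most δ/b_min. -/
theorem stmt5 (N K : ℕ) (hKN : K < N) (μ ν b : Fin N → ℝ) (bmin bmax δ : ℝ)
    (hbmin : 0 < bmin) (hδ : 0 ≤ δ)
    (hb : ∀ i, bmin ≤ b i ∧ b i ≤ bmax)
    (hμν : ∀ i, |μ i - ν i| ≤ δ)
    (σ τ : Equiv.Perm (Fin N))
    (hσ : ∀ i j : Fin N, i ≤ j → μ (σ j) / b (σ j) ≤ μ (σ i) / b (σ i))
    (hτ : ∀ i j : Fin N, i ≤ j → ν (τ j) / b (τ j) ≤ ν (τ i) / b (τ i)) :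
    μ (σ ⟨K, hKN⟩) / b (σ ⟨K, hKN⟩) - ν (τ ⟨K, hKN⟩) / b (τ ⟨K, hKN⟩) ≤ δ / bmin := by
  -- Pigeonhole: some worker among the top K+1 in the σ-ordering has τ-rank ≥ K
  have hpig : ∃ i : Fin N, i.val ≤ K ∧ K ≤ ((τ.symm (σ i)) : Fin N).val := by
    by_contra h
    push_neg at h
    have hf : ∀ j : Fin (K + 1), ((τ.symm (σ ⟨j.val, lt_of_lt_of_le j.isLt hKN⟩)) : Fin N).val < K := by
      intro j
      exact h ⟨j.val, lt_of_lt_of_le j.isLt hKN⟩ (Nat.lt_succ_iff.mp j.isLt)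
    let f : Fin (K + 1) → Fin K := fun j => ⟨_, hf j⟩
    have hinj : Function.Injective f := by
      intro a c hac
      have : (τ.symm (σ ⟨a.val, lt_of_lt_of_le a.isLt hKN⟩) : Fin N)
          = τ.symm (σ ⟨c.val, lt_of_lt_of_le c.isLt hKN⟩) := by
        apply Fin.ext
        have := congrArg Fin.val hac
        simpa [f] using this
      have := σ.injective (τ.symm.injective this)
      have := congrArg Fin.val this
      exact Fin.ext this
    have := Fintype.card_le_of_injective f hinj
    simp at this
  obtain ⟨i, hiK, hKi⟩ := hpig
  have hbi := (hb (σ i)).1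
  have hbpos : (0 : ℝ) < b (σ i) := lt_of_lt_of_le hbmin hbi
  -- μ-ratio of j* is at most μ-ratio of σ i
  have h1 : μ (σ ⟨K, hKN⟩) / b (σ ⟨K, hKN⟩) ≤ μ (σ i) / b (σ i) :=
    hσ i ⟨K, hKN⟩ hiK
  -- ν-ratio of σ i is at most ν-ratio of j†
  have h2 : ν (σ i) / b (σ i) ≤ ν (τ ⟨K, hKN⟩) / b (τ ⟨K, hKN⟩) := by
    have := hτ ⟨K, hKN⟩ (τ.symm (σ i)) hKi
    simpa using this
  have h3 : μ (σ i) - ν (σ i) ≤ δ := le_trans (le_abs_self _) (hμν (σ i))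
  have h4 : (μ (σ i) - ν (σ i)) / b (σ i) ≤ δ / bmin := by
    calc (μ (σ i) - ν (σ i)) / b (σ i) ≤ δ / b (σ i) := by
          apply div_le_div_of_nonneg_right h3 hbpos.le |>.trans_eq rfl
      _ ≤ δ / bmin := by
          apply div_le_div_of_nonneg_left hδ hbmin hbi
  calc μ (σ ⟨K, hKN⟩) / b (σ ⟨K, hKN⟩) - ν (τ ⟨K, hKN⟩) / b (τ ⟨K, hKN⟩)
      ≤ μ (σ i) / b (σ i) - ν (σ i) / b (σ i) := by linarith
    _ = (μ (σ i) - ν (σ i)) / b (σ i) := by ring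
    _ ≤ δ / bmin := h4
end
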